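/- arXiv:2308.16196 — 3 statements merged into one kernel-verified Lean document; each statement's English description precedes it below -/
import Mathlib

section
/- Flow (semigroup) property of the positive reflection map (Proposition on the reflection map, part (ii)): Let r0, z ∈ ℝ and let β : ℝ → ℝ be bounded on [r0, r] for every r ≥ r0. Fix r' ≥ r0 and set y = (Γ^{+,z}β)(r'). Then for every r ≥ r', (Γ^{+,z}β)(r) = y + β(r) − β(r') + sup_{v ∈ [r', r]} max(z − (y + β(v) − β(r')), 0); that is, on [r', ∞) the path (Γ^{+,z}β) coincides with the positive reflection map at z, based at r', applied to the shifted path u ↦ y + β(u) − β(r'). -/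
/-!
Split `[r0, r]` at `r'`. With `A` and `B` the suprema of `(z - β)⁺` over `[r0, r']` and `[r', r]`,
the left side is `β r + max A B`, while `y = β r' + A` turns the shifted path's sup into
`(B - A)⁺` (using `A ≥ 0`); and `max A B = A + (B - A)⁺`.
-/

/-- Positive reflection map at level `z`, based at `r0`:
`(Γ^{+,z}β)(r) = β(r) + sup_{u ∈ [r0, r]} max(z − β(u), 0)`. -/
noncomputable def posRefl (r0 z : ℝ) (β : ℝ → ℝ) (r : ℝ) : ℝ :=
  β r + sSup ((fun u => max (z - β u) 0) '' Set.Icc r0 r)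

open Set

lemma csSup_image_Icc_eq_max {α γ : Type*} [LinearOrder α] [ConditionallyCompleteLinearOrder γ]
    {f : α → γ} {a b c : α} (hab : a ≤ b) (hbc : b ≤ c) (hf : BddAbove (f '' Icc a c)) :
    sSup (f '' Icc a c) = max (sSup (f '' Icc a b)) (sSup (f '' Icc b c)) := by
  rw [← Icc_union_Icc_eq_Icc hab hbc, image_union]
  exact csSup_union (hf.mono (image_mono (Icc_subset_Icc_right hbc))) ((nonempty_Icc.2 hab).image f)
    (hf.mono (image_mono (Icc_subset_Icc_left hab))) ((nonempty_Icc.2 hbc).image f)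

lemma csSup_image_max_sub_zero {S : Set ℝ} (c : ℝ) (hne : S.Nonempty) (hbdd : BddAbove S) :
    sSup ((fun x => max (x - c) 0) '' S) = max (sSup S - c) 0 :=
  (Monotone.map_csSup_of_continuousAt (by fun_prop)
    (fun _ _ h => max_le_max (sub_le_sub_right h c) le_rfl) hne hbdd).symm

lemma BddBelow.bddAbove_image_max_sub_zero {β : ℝ → ℝ} {s : Set ℝ} (z : ℝ)
    (hβ : BddBelow (β '' s)) : BddAbove ((fun u => max (z - β u) 0) '' s) := by
  rw [← image_image (fun x => max (z - x) 0)]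
  exact Antitone.map_bddBelow (fun _ _ h => max_le_max (sub_le_sub_left h z) le_rfl) hβ

lemma max_max_zero_sub_zero {a c : ℝ} (hc : 0 ≤ c) : max (max a 0 - c) 0 = max (a - c) 0 := by
  rcases le_total a 0 with ha | ha
  · rw [max_eq_right ha, max_eq_right (by linarith), max_eq_right (by linarith)]
  · rw [max_eq_left ha]

lemma max_eq_add_max_sub_zero (a b : ℝ) : max a b = a + max (b - a) 0 := by
  rw [max_comm _ (0 : ℝ), ← max_add_add_left, add_zero, add_sub_cancel]

/-- Flow (semigroup) property of the positive reflection map: for `r0 ≤ r' ≤ r`, with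
`y = (Γ^{+,z}β)(r')`,
`(Γ^{+,z}β)(r) = y + β(r) − β(r') + sup_{v ∈ [r', r]} max(z − (y + β(v) − β(r')), 0)`,
i.e. on `[r', ∞)` the reflected path coincides with the positive reflection map at `z` based
at `r'` applied to the shifted path `u ↦ y + β(u) − β(r')`. -/
theorem posRefl_flow (r0 z : ℝ) (β : ℝ → ℝ)
    (hβ : ∀ r, r0 ≤ r → ∃ M, ∀ u ∈ Set.Icc r0 r, |β u| ≤ M)
    (r' : ℝ) (hr' : r0 ≤ r') (y : ℝ) (hy : y = posRefl r0 z β r') :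
    ∀ r, r' ≤ r →
      posRefl r0 z β r = posRefl r' z (fun u => y + β u - β r') r := by
  intro r hr
  set f : ℝ → ℝ := fun u => max (z - β u) 0
  have hbdd : BddAbove (f '' Icc r0 r) := by
    obtain ⟨M, hM⟩ := hβ r (hr'.trans hr)
    refine BddBelow.bddAbove_image_max_sub_zero z ⟨-M, ?_⟩
    rintro _ ⟨u, hu, rfl⟩
    exact neg_le_of_abs_le (hM u hu)
  set A := sSup (f '' Icc r0 r')
  set B := sSup (f '' Icc r' r)
  have hA : 0 ≤ A := Real.sSup_nonneg (by rintro _ ⟨u, -, rfl⟩; exact le_max_right _ _)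
  have hyA : y = β r' + A := hy
  have hshift : (fun v => max (z - (y + β v - β r')) 0) = (fun x => max (x - A) 0) ∘ f := by
    funext v
    simp only [Function.comp, f, max_max_zero_sub_zero hA, hyA]
    ring_nf
  calc posRefl r0 z β r = β r + max A B := by rw [posRefl, csSup_image_Icc_eq_max hr' hr hbdd]
    _ = y + β r - β r' + max (B - A) 0 := by rw [max_eq_add_max_sub_zero, hyA]; ring
    _ = posRefl r' z (fun u => y + β u - β r') r := by
      rw [posRefl, hshift, image_comp, csSup_image_max_sub_zero A ((nonempty_Icc.2 hr).image f)
        (hbdd.mono (image_mono (Icc_subset_Icc_left hr')))]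
end

section
/- Oscillation lower bound for crossing under negative reflection (deterministic core of the lemma on the asymptotic behavior of Δ'_n): Let η0 > 0, r0 ∈ ℝ, and let β : [r0, ∞) → ℝ be continuous with β(r0) ≥ 0. If there exists r ≥ r0 such that (Γ^{−,η0}β)(r) ≤ −η0, where the negative reflection map at level η0 is based at r0, then there exist u, v with r0 ≤ u ≤ v ≤ r such that β(u) − β(v) ≥ η0. -/
/-- Negative reflection map at level `z`, based at `r0`:
`(Γ^{−,z}β)(r) = β(r) − sup_{u ∈ [r0, r]} max(β(u) − z, 0)`. -/
noncomputable def negRefl (r0 z : ℝ) (β : ℝ → ℝ) (r : ℝ) : ℝ :=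
  β r - sSup ((fun u => max (β u - z) 0) '' Set.Icc r0 r)

/-- Oscillation lower bound for crossing under negative reflection: if `β` is continuous on
`[r0, ∞)` with `β(r0) ≥ 0`, and the path negatively reflected at the level `η0 > 0` reaches
the level `−η0` at some time `r ≥ r0`, then there exist `r0 ≤ u ≤ v ≤ r` with
`β(u) − β(v) ≥ η0`. -/
theorem negRefl_crossing_oscillation (η0 r0 : ℝ) (hη0 : 0 < η0) (β : ℝ → ℝ)
    (hcont : ContinuousOn β (Set.Ici r0)) (h0 : 0 ≤ β r0)
    (r : ℝ) (hr : r0 ≤ r) (hcross : negRefl r0 η0 β r ≤ -η0) :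
    ∃ u v : ℝ, r0 ≤ u ∧ u ≤ v ∧ v ≤ r ∧ η0 ≤ β u - β v := by
  set g : ℝ → ℝ := fun u => max (β u - η0) 0 with hg
  have hgc : ContinuousOn g (Set.Icc r0 r) :=
    (continuous_id.max continuous_const).comp_continuousOn
      ((hcont.mono Set.Icc_subset_Ici_self).sub continuousOn_const)
  have hS : β r + η0 ≤ sSup (g '' Set.Icc r0 r) := by
    have := hcross
    unfold negRefl at this
    linarith
  by_cases hcase : β r + η0 ≤ 0
  · exact ⟨r0, r, le_refl r0, hr, le_refl r, by linarith⟩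
  · -- sup is positive, so it is attained at some u* with g u* = β u* - η0
    obtain ⟨u, hu, hmax⟩ := (isCompact_Icc (a := r0) (b := r)).exists_isMaxOn
      (Set.nonempty_Icc.mpr hr) hgc
    have hsup : sSup (g '' Set.Icc r0 r) = g u := by
      apply le_antisymm
      · apply csSup_le ((Set.nonempty_Icc.mpr hr).image g)
        rintro _ ⟨x, hx, rfl⟩
        exact hmax hx
      · exact le_csSup ((isCompact_Icc.image_of_continuousOn hgc).bddAbove)
          (Set.mem_image_of_mem g hu)
    rw [hsup] at hS
    have hgu : g u = β u - η0 := by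
      have h1 : 0 < g u := by linarith
      have h2 : 0 < β u - η0 := by
        by_contra h
        push_neg at h
        simp only [hg, max_eq_right h] at h1
        exact lt_irrefl 0 h1
      simp [hg, max_eq_left h2.le]
    exact ⟨u, r, hu.1, hu.2, le_refl r, by rw [hgu] at hS; linarith⟩
end

section
/- Finiteness of all moments of hitting times of reflected drifted Brownian motion (Proposition 'Moments of T^c_{z0,z1}'): Let (W_r)_{r ≥ 0} be a standard one-dimensional Brownian motion on a probability space (Ω, F, P). Let c ∈ ℝ and 0 ≤ z0 ≤ z1. Define Z_r = (Γ^{+,0}β)(r) with base point 0 and β(r) = z0 + c·r + W_r, and set T = inf{ r ≥ 0 : Z_r = z1 }. Then T is almost surely finite and for every integer k ≥ 1, E[T^k] < ∞. -/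
open MeasureTheory ProbabilityTheory

/-- `W` is a standard one-dimensional Brownian motion under the probability measure `P`:
`W 0 = 0` a.s., a.s. continuous sample paths on `[0, ∞)`, independent increments, and
`W t − W s` a centered Gaussian of variance `t − s` for `0 ≤ s ≤ t`. -/
structure IsStandardBrownianMotion {Ω : Type*} [MeasurableSpace Ω] (P : Measure Ω)
    (W : ℝ → Ω → ℝ) : Prop where
  measurable : ∀ t : ℝ, Measurable (W t)
  init : ∀ᵐ ω ∂P, W 0 ω = 0
  cont : ∀ᵐ ω ∂P, ContinuousOn (fun t => W t ω) (Set.Ici 0)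
  indep_incr : ∀ (n : ℕ) (t : Fin (n + 1) → ℝ), Monotone t → (∀ i, 0 ≤ t i) →
    iIndepFun
      (fun i : Fin n => fun ω => W (t i.succ) ω - W (t i.castSucc) ω) P
  gauss_incr : ∀ s t : ℝ, 0 ≤ s → s ≤ t →
    Measure.map (fun ω => W t ω - W s ω) P = gaussianReal 0 (Real.toNNReal (t - s))

/-!
Pathwise, the reflected path `Z` is continuous, starts at `max z0 0 = z0 ≤ z1`, stays `≥ 0`, and
increases on any `[r, s]` by at least as much as `β`. Hence if the increment of `W` over
`[n, n + 1]` is at least `κ = z1 - c + 1`, then `Z (n + 1) > z1` and `Z` hits `z1` before time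
`n + 1`. These unit increments are i.i.d. Gaussian, so `P (n ≤ T) ≤ q ^ n` with
`q = P (N(0, 1) < κ) < 1`, and this geometric tail bounds every moment of `T`.
For measurability, `T ≤ a` iff `0 ≤ a` and `z1 ≤ sup_{[0, a]} Z`, and the supremum of an a.s.
continuous process over a compact set is a.s. a countable supremum.
-/

open Set
open scoped ENNReal

theorem continuousOn_sSup_image_Icc {g : ℝ → ℝ} {r0 : ℝ} (hg : ContinuousOn g (Ici r0)) :
    ContinuousOn (fun r => sSup (g '' Icc r0 r)) (Ici r0) := by
  -- parametrize `[r0, r]` by `[0, 1]`, so that the supremum runs over a fixed compact set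
  set g' := fun u => g (max u r0)
  have hg' : Continuous g' := hg.comp_continuous (by fun_prop) fun u => le_max_right u r0
  have hsup : Continuous fun r => sSup ((fun s => g' (r0 + s * (r - r0))) '' Icc 0 1) :=
    isCompact_Icc.continuous_sSup (f := fun r s => g' (r0 + s * (r - r0))) (by fun_prop)
  refine hsup.continuousOn.congr fun r (hr : r0 ≤ r) => ?_
  have himage : (fun s => r0 + s * (r - r0)) '' Icc 0 1 = Icc r0 r := by
    rw [← image_image (r0 + ·) (· * (r - r0)), image_mul_right_Icc zero_le_one (sub_nonneg.2 hr),
      image_const_add_Icc]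
    simp
  have hagree : EqOn g g' (Icc r0 r) := fun u hu => by simp [g', max_eq_left hu.1]
  dsimp only
  rw [← image_image g', himage, hagree.image_eq]

section posRefl

variable {r0 z : ℝ} {β : ℝ → ℝ}

theorem posRefl_self : posRefl r0 z β r0 = max (β r0) z := by
  rw [posRefl, Icc_self, image_singleton, csSup_singleton]
  rcases le_total (β r0) z with h | h
  · rw [max_eq_left (sub_nonneg.2 h), max_eq_right h]; ring
  · rw [max_eq_right (sub_nonpos.2 h), max_eq_left h, add_zero]

variable (hβ : ContinuousOn β (Ici r0))
include hβ

theorem continuousOn_posRefl : ContinuousOn (posRefl r0 z β) (Ici r0) :=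
  hβ.add (continuousOn_sSup_image_Icc ((continuousOn_const.sub hβ).sup continuousOn_const))

theorem bddAbove_posRefl_image (r : ℝ) :
    BddAbove ((fun u => max (z - β u) 0) '' Icc r0 r) :=
  isCompact_Icc.bddAbove_image
    (((continuousOn_const.sub hβ).sup continuousOn_const).mono Icc_subset_Ici_self)

theorem le_posRefl {r : ℝ} (hr : r0 ≤ r) : z ≤ posRefl r0 z β r := by
  have := le_csSup (bddAbove_posRefl_image (z := z) hβ r) (mem_image_of_mem _ (right_mem_Icc.2 hr))
  rw [posRefl]
  linarith [le_max_left (z - β r) 0]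

theorem sub_le_posRefl_sub {r s : ℝ} (hr : r0 ≤ r) (hrs : r ≤ s) :
    β s - β r ≤ posRefl r0 z β s - posRefl r0 z β r := by
  have := csSup_le_csSup (bddAbove_posRefl_image (z := z) hβ s) ((nonempty_Icc.2 hr).image _)
    (image_mono (Icc_subset_Icc_right hrs))
  rw [posRefl, posRefl]
  linarith

theorem exists_posRefl_eq_of_lt_sub {y r s : ℝ} (hy : max (β r0) z ≤ y) (hr : r0 ≤ r)
    (hrs : r ≤ s) (hjump : y - z < β s - β r) : ∃ t ∈ Ico r0 s, posRefl r0 z β t = y := by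
  have hys : y < posRefl r0 z β s := by
    linarith [le_posRefl (z := z) hβ hr, sub_le_posRefl_sub (z := z) hβ hr hrs]
  exact intermediate_value_Ico (hr.trans hrs) ((continuousOn_posRefl hβ).mono Icc_subset_Ici_self)
    ⟨posRefl_self (z := z) ▸ hy, hys⟩

end posRefl

theorem sInf_le_iff_le_sSup_image_Icc {f : ℝ → ℝ} {r0 y a : ℝ} (hf : ContinuousOn f (Ici r0))
    (hf0 : f r0 ≤ y) (hS : {r | r0 ≤ r ∧ f r = y}.Nonempty) :
    sInf {r | r0 ≤ r ∧ f r = y} ≤ a ↔ r0 ≤ a ∧ y ≤ sSup (f '' Icc r0 a) := by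
  set S := {r | r0 ≤ r ∧ f r = y}
  have hbdd : BddBelow S := ⟨r0, fun r hr => hr.1⟩
  have hmem : sInf S ∈ S :=
    (hf.preimage_isClosed_of_isClosed isClosed_Ici isClosed_singleton).csInf_mem hS hbdd
  constructor
  · intro ha
    refine ⟨hmem.1.trans ha, hmem.2 ▸ le_csSup ?_ (mem_image_of_mem f ⟨hmem.1, ha⟩)⟩
    exact isCompact_Icc.bddAbove_image (hf.mono fun _ hx => hx.1)
  · rintro ⟨ha, hy⟩
    obtain ⟨r, hr, hmax⟩ :=
      isCompact_Icc.exists_sSup_image_eq (nonempty_Icc.2 ha) (hf.mono fun _ hx => hx.1)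
    obtain ⟨t, ht, hft⟩ := intermediate_value_Icc hr.1
      (hf.mono fun _ hx => hx.1) ⟨hf0, hmax ▸ hy⟩
    exact (csInf_le hbdd ⟨ht.1, hft⟩).trans (ht.2.trans hr.2)

theorem summable_add_one_pow_mul_geometric (k : ℕ) {r : ℝ} (hr0 : 0 ≤ r) (hr1 : r < 1) :
    Summable fun n : ℕ => ((n : ℝ) + 1) ^ k * r ^ n := by
  -- `(n + 1) ^ k ≤ (n + 1) (n + 2) ⋯ (n + k) = (n + k).descFactorial k`
  refine (summable_descFactorial_mul_geometric_of_norm_lt_one k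
    (by rwa [Real.norm_of_nonneg hr0])).of_nonneg_of_le (fun n => by positivity) fun n => ?_
  gcongr
  rw [Nat.add_descFactorial_eq_ascFactorial]
  exact_mod_cast Nat.pow_succ_le_ascFactorial (n + 1) k

theorem ContinuousOn.sSup_image_eq_of_subset_closure {α : Type*} [TopologicalSpace α]
    {f : α → ℝ} {K D : Set α} (hK : IsCompact K) (hf : ContinuousOn f K) (hDK : D ⊆ K)
    (hKD : K ⊆ closure D) : sSup (f '' K) = sSup (f '' D) := by
  rcases D.eq_empty_or_nonempty with rfl | hD
  · rw [closure_empty, subset_empty_iff] at hKD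
    rw [hKD]
  have hclosure : f '' K ⊆ closure (f '' D) := by
    rintro _ ⟨x, hx, rfl⟩
    exact ((hf x hx).mono hDK).mem_closure_image (hKD hx)
  have hlub := isLUB_csSup (hD.image f) ((hK.bddAbove_image hf).mono (image_mono hDK))
  exact ((isLUB_iff_of_subset_of_subset_closure (image_mono hDK) hclosure).1 hlub).csSup_eq
    ((hD.mono hDK).image f)

section

variable {Ω : Type*} [MeasurableSpace Ω] {μ : Measure Ω}

theorem aemeasurable_sSup_image_of_isCompact {X : ℝ → Ω → ℝ} {K : Set ℝ} (hK : IsCompact K)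
    (hX : ∀ t, AEMeasurable (X t) μ) (hc : ∀ᵐ ω ∂μ, ContinuousOn (fun t => X t ω) K) :
    AEMeasurable (fun ω => sSup ((fun t => X t ω) '' K)) μ := by
  obtain ⟨D, hDK, hDc, hKD⟩ :=
    (TopologicalSpace.IsSeparable.of_separableSpace K).exists_countable_dense_subset
  have : Countable D := hDc.to_subtype
  refine (AEMeasurable.iSup fun t : D => hX t).congr ?_
  filter_upwards [hc] with ω hω
  rw [hω.sSup_image_eq_of_subset_closure hK hDK hKD, sSup_image']

theorem aemeasurable_posRefl {r0 z : ℝ} {β : ℝ → Ω → ℝ} (hβ : ∀ t, AEMeasurable (β t) μ)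
    (hc : ∀ᵐ ω ∂μ, ContinuousOn (fun t => β t ω) (Ici r0)) (r : ℝ) :
    AEMeasurable (fun ω => posRefl r0 z (fun t => β t ω) r) μ := by
  refine (hβ r).add (aemeasurable_sSup_image_of_isCompact isCompact_Icc
    (fun t => ((hβ t).const_sub z).max aemeasurable_const) ?_)
  filter_upwards [hc] with ω hω
  exact ((continuousOn_const.sub hω).sup continuousOn_const).mono Icc_subset_Ici_self

theorem aemeasurable_sInf_hitting {Y : ℝ → Ω → ℝ} {r0 y : ℝ} (hY : ∀ t, AEMeasurable (Y t) μ)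
    (hc : ∀ᵐ ω ∂μ, ContinuousOn (fun t => Y t ω) (Ici r0)) (h0 : ∀ᵐ ω ∂μ, Y r0 ω ≤ y)
    (hne : ∀ᵐ ω ∂μ, {r | r0 ≤ r ∧ Y r ω = y}.Nonempty) :
    AEMeasurable (fun ω => sInf {r | r0 ≤ r ∧ Y r ω = y}) μ := by
  refine NullMeasurable.aemeasurable (measurable_of_Iic fun a => ?_)
  have hsup := aemeasurable_sSup_image_of_isCompact (isCompact_Icc (a := r0) (b := a)) hY
    (hc.mono fun ω hω => hω.mono Icc_subset_Ici_self)
  refine ((MeasurableSet.const (r0 ≤ a)).nullMeasurableSet.inter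
    (hsup.nullMeasurableSet_preimage (measurableSet_Ici (a := y)))).congr ?_
  filter_upwards [hc, h0, hne] with ω hcω h0ω hneω
  exact propext (sInf_le_iff_le_sSup_image_Icc hcω h0ω hneω).symm

theorem integrable_pow_of_measure_le_geometric {X : Ω → ℝ} (hX : AEMeasurable X μ)
    (hX0 : 0 ≤ᵐ[μ] X) {q : ℝ≥0∞} (hq : q < 1) (htail : ∀ n : ℕ, μ {ω | n ≤ X ω} ≤ q ^ n)
    (k : ℕ) : Integrable (fun ω => X ω ^ k) μ := by
  refine ⟨(hX.pow_const k).aestronglyMeasurable, ?_⟩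
  rw [hasFiniteIntegral_iff_ofReal (hX0.mono fun ω hω => pow_nonneg hω k)]
  set A : ℕ → Set Ω := fun n => {ω | n ≤ X ω}
  have hA : ∀ n, NullMeasurableSet (A n) μ := fun n => nullMeasurableSet_le aemeasurable_const hX
  have hpointwise : ∀ᵐ ω ∂μ, ENNReal.ofReal (X ω ^ k) ≤
      ∑' n, (A n).indicator (fun _ => ENNReal.ofReal ((n + 1) ^ k)) ω := by
    filter_upwards [hX0] with ω hω
    refine le_trans ?_ (ENNReal.le_tsum ⌊X ω⌋₊)
    rw [indicator_of_mem (show ω ∈ A ⌊X ω⌋₊ from Nat.floor_le hω)]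
    exact ENNReal.ofReal_le_ofReal (pow_le_pow_left₀ hω (Nat.lt_floor_add_one _).le k)
  have hq' : q = ENNReal.ofReal q.toReal := (ENNReal.ofReal_toReal hq.ne_top).symm
  calc ∫⁻ ω, ENNReal.ofReal (X ω ^ k) ∂μ
      ≤ ∫⁻ ω, ∑' n, (A n).indicator (fun _ => ENNReal.ofReal ((n + 1) ^ k)) ω ∂μ :=
        lintegral_mono_ae hpointwise
    _ = ∑' n : ℕ, ENNReal.ofReal ((n + 1) ^ k) * μ (A n) := by
        rw [lintegral_tsum fun n => aemeasurable_const.indicator₀ (hA n)]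
        exact tsum_congr fun n => lintegral_indicator_const₀ (hA n) _
    _ ≤ ∑' n : ℕ, ENNReal.ofReal ((n + 1) ^ k * q.toReal ^ n) := by
        refine ENNReal.tsum_le_tsum fun n => ?_
        rw [ENNReal.ofReal_mul (by positivity), ENNReal.ofReal_pow ENNReal.toReal_nonneg, ← hq']
        gcongr
        exact htail n
    _ < ∞ := by
        rw [← ENNReal.ofReal_tsum_of_nonneg (fun n => by positivity)
          (summable_add_one_pow_mul_geometric k ENNReal.toReal_nonneg
            (ENNReal.toReal_lt_of_lt_ofReal (by simpa using hq)))]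
        exact ENNReal.ofReal_lt_top

end

theorem gaussianReal_Iio_lt_one (m : ℝ) {v : NNReal} (hv : v ≠ 0) (κ : ℝ) :
    gaussianReal m v (Iio κ) < 1 := by
  have hIci : gaussianReal m v (Ici κ) ≠ 0 := fun h =>
    by simpa using gaussianReal_absolutelyContinuous' m hv h
  rw [← compl_Ici, prob_compl_eq_one_sub measurableSet_Ici]
  exact ENNReal.sub_lt_self ENNReal.one_ne_top one_ne_zero hIci

namespace IsStandardBrownianMotion

variable {Ω : Type*} [MeasurableSpace Ω] {P : Measure Ω} {W : ℝ → Ω → ℝ}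

theorem map_sub_nat (hW : IsStandardBrownianMotion P W) (n : ℕ) :
    P.map (fun ω => W (n + 1) ω - W n ω) = gaussianReal 0 1 := by
  simpa using hW.gauss_incr n (n + 1) n.cast_nonneg (by linarith)

theorem measure_forall_sub_nat_lt (hW : IsStandardBrownianMotion P W) (κ : ℝ) (N : ℕ) :
    P {ω | ∀ n < N, W (n + 1) ω - W n ω < κ} = gaussianReal 0 1 (Iio κ) ^ N := by
  have hind := hW.indep_incr N (fun i => (i : ℕ)) (fun i j hij => Nat.cast_le.2 hij)
    fun i => Nat.cast_nonneg _
  simp only [Fin.val_succ, Fin.val_castSucc, Nat.cast_add, Nat.cast_one] at hind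
  have hset : {ω | ∀ n < N, W (n + 1) ω - W n ω < κ} =
      ⋂ i ∈ (Finset.univ : Finset (Fin N)),
        (fun ω => W ((i : ℕ) + 1) ω - W (i : ℕ) ω) ⁻¹' Iio κ := by
    ext ω
    simp [Fin.forall_iff]
  rw [hset, hind.measure_inter_preimage_eq_mul _ fun _ _ => measurableSet_Iio]
  have hlaw : ∀ i : Fin N, P ((fun ω => W ((i : ℕ) + 1) ω - W (i : ℕ) ω) ⁻¹' Iio κ) =
      gaussianReal 0 1 (Iio κ) := fun i => by
    rw [← Measure.map_apply (f := fun ω => W ((i : ℕ) + 1) ω - W (i : ℕ) ω)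
      ((hW.measurable _).sub (hW.measurable _)) measurableSet_Iio, hW.map_sub_nat]
  simp [hlaw]

theorem ae_exists_le_sub_nat [IsProbabilityMeasure P] (hW : IsStandardBrownianMotion P W)
    (κ : ℝ) : ∀ᵐ ω ∂P, ∃ n : ℕ, κ ≤ W (n + 1) ω - W n ω := by
  have hnull : P {ω | ∀ n : ℕ, W (n + 1) ω - W n ω < κ} = 0 := by
    refine le_antisymm (ge_of_tendsto' (ENNReal.tendsto_pow_atTop_nhds_zero_of_lt_one
      (gaussianReal_Iio_lt_one 0 one_ne_zero κ)) fun N => ?_) bot_le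
    refine (measure_mono ?_).trans (hW.measure_forall_sub_nat_lt κ N).le
    exact fun ω hω n _ => hω n
  filter_upwards [measure_eq_zero_iff_ae_notMem.1 hnull] with ω hω
  simpa using hω

theorem measure_nat_le_le_of_lt (hW : IsStandardBrownianMotion P W)
    {T : Ω → ℝ} (κ : ℝ) (hT : ∀ᵐ ω ∂P, ∀ n : ℕ, κ ≤ W (n + 1) ω - W n ω → T ω < n + 1) (n : ℕ) :
    P {ω | n ≤ T ω} ≤ gaussianReal 0 1 (Iio κ) ^ n := by
  refine (measure_mono_ae ?_).trans (hW.measure_forall_sub_nat_lt κ n).le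
  filter_upwards [hT] with ω hω (hnT : (n : ℝ) ≤ T ω) j hj
  by_contra! hjump
  have : (j : ℝ) + 1 ≤ n := by exact_mod_cast hj
  linarith [hω j hjump]

end IsStandardBrownianMotion

/-- Finiteness of all moments of the hitting time of the level `z1 ≥ z0 ≥ 0` by the Brownian
motion with drift `c` started from `z0` and positively reflected at `0`: the hitting time
`T = inf{r ≥ 0 : Z_r = z1}` is a.s. finite (the hitting set is a.s. nonempty) and
`E[T^k] < ∞` for every integer `k ≥ 1`. -/
theorem reflected_drifted_BM_hitting_time_moments {Ω : Type*} [MeasurableSpace Ω]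
    (P : Measure Ω) [IsProbabilityMeasure P] (W : ℝ → Ω → ℝ)
    (hW : IsStandardBrownianMotion P W) (c z0 z1 : ℝ) (h0 : 0 ≤ z0) (h1 : z0 ≤ z1)
    (Z : ℝ → Ω → ℝ) (hZ : ∀ r ω, Z r ω = posRefl 0 0 (fun s => z0 + c * s + W s ω) r)
    (T : Ω → ℝ) (hT : ∀ ω, T ω = sInf {r : ℝ | 0 ≤ r ∧ Z r ω = z1}) :
    (∀ᵐ ω ∂P, {r : ℝ | 0 ≤ r ∧ Z r ω = z1}.Nonempty) ∧
    ∀ k : ℕ, 1 ≤ k → Integrable (fun ω => (T ω) ^ k) P := by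
  obtain rfl : Z = fun r ω => posRefl 0 0 (fun s => z0 + c * s + W s ω) r :=
    funext fun r => funext (hZ r)
  obtain rfl : T = fun ω =>
      sInf {r : ℝ | 0 ≤ r ∧ posRefl 0 0 (fun s => z0 + c * s + W s ω) r = z1} := funext hT
  set κ := z1 - c + 1
  have hpath : ∀ᵐ ω ∂P, ContinuousOn (fun s => z0 + c * s + W s ω) (Ici 0) ∧
      posRefl 0 0 (fun s => z0 + c * s + W s ω) 0 ≤ z1 := by
    filter_upwards [hW.cont, hW.init] with ω hc hω0
    exact ⟨by fun_prop, by simp [posRefl_self, hω0, h1, h0.trans h1]⟩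
  -- an increment `≥ κ` of `W` over `[n, n + 1]` pushes `Z` above `z1` by time `n + 1`
  have hhit : ∀ᵐ ω ∂P, ∀ n : ℕ, κ ≤ W (n + 1) ω - W n ω →
      ∃ t ∈ Ico 0 ((n : ℝ) + 1), posRefl 0 0 (fun s => z0 + c * s + W s ω) t = z1 := by
    filter_upwards [hpath] with ω ⟨hc, hω0⟩ n hn
    exact exists_posRefl_eq_of_lt_sub hc (by simpa [posRefl_self] using hω0) n.cast_nonneg
      (by linarith) (by linarith)
  have hne : ∀ᵐ ω ∂P, {r | 0 ≤ r ∧ posRefl 0 0 (fun s => z0 + c * s + W s ω) r = z1}.Nonempty := by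
    filter_upwards [hhit, hW.ae_exists_le_sub_nat κ] with ω hω ⟨n, hn⟩
    obtain ⟨t, ht, hZt⟩ := hω n hn
    exact ⟨t, ht.1, hZt⟩
  have hTmeas := aemeasurable_sInf_hitting
    (aemeasurable_posRefl (fun t => ((hW.measurable t).const_add _).aemeasurable)
      (hpath.mono fun ω hω => hω.1))
    (hpath.mono fun ω hω => continuousOn_posRefl hω.1) (hpath.mono fun ω hω => hω.2) hne
  have hTlt : ∀ᵐ ω ∂P, ∀ n : ℕ, κ ≤ W (n + 1) ω - W n ω →
      sInf {r | 0 ≤ r ∧ posRefl 0 0 (fun s => z0 + c * s + W s ω) r = z1} < n + 1 := by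
    filter_upwards [hhit] with ω hω n hn
    obtain ⟨t, ht, hZt⟩ := hω n hn
    refine (csInf_le ⟨0, fun r hr => hr.1⟩ ?_).trans_lt ht.2
    exact ⟨ht.1, hZt⟩
  exact ⟨hne, fun k _ => integrable_pow_of_measure_le_geometric hTmeas
    (ae_of_all _ fun ω => Real.sInf_nonneg fun r hr => hr.1)
    (gaussianReal_Iio_lt_one 0 one_ne_zero κ) (hW.measure_nat_le_le_of_lt κ hTlt) k⟩
end
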